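/- arXiv:1508.01863 — 2 statements merged into one kernel-verified Lean document; each statement's English description precedes it below -/
import Mathlib

section
/- The polynomial P(t) = 1 - t + 9t² - 45t³ + 108t⁴ - 324t⁵ + 972t⁶ - 3645t⁷ + 6561t⁸ - 6561t⁹ + 59049t¹⁰ has exactly zero roots t with 1/(3t) a root of unity; equivalently, no inverse root of P is of the form 3ζ with ζ a root of unity. -/
/-!
Put `Q(x) = 3 P(x/3)`, an integer polynomial of degree 10. If `t` is a root of `P` with `1/(3t)`
a root of unity, then `3t` is a root of `Q` and a primitive `d`-th root of unity, so `Φ_d ∣ Q`,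
whence `φ(d) ≤ 10` and `Φ_d(3) ∣ Q(3) = 2² · 3³ · 1559`. Since `Φ_d(3) ∣ 3^d - 1`, it is prime to
`3`; and `1559 ∤ Φ_d(3)`, as otherwise the order of `3` modulo `1559`, a divisor of
`1558 = 2 · 41 · 19` not dividing `82` and hence a multiple of `19`, divides `d`,
forcing `18 ∣ φ(d)`. Hence `Φ_d(3) ∣ 4`, which contradicts `|Φ_d(3)| > 2^φ(d) ≥ 4` for `d ≥ 3`; the
cases `d = 1, 2` are excluded by `Q(1) ≠ 0` and `Q(-1) ≠ 0`.
-/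

open Polynomial

namespace Polynomial

theorem cyclotomic_dvd_of_aeval_eq_zero {K : Type*} [Field K] [CharZero K] {μ : K} {n : ℕ}
    (hμ : IsPrimitiveRoot μ n) (hn : 0 < n) {f : ℤ[X]} (hf : aeval μ f = 0) :
    cyclotomic n ℤ ∣ f :=
  cyclotomic_eq_minpoly hμ hn ▸ minpoly.isIntegrallyClosed_dvd (hμ.isIntegral hn) hf

theorem cyclotomic_eval_dvd_pow_sub_one {R : Type*} [CommRing R] (n : ℕ) (q : R) :
    (cyclotomic n R).eval q ∣ q ^ n - 1 := by
  simpa using eval_dvd (x := q) (cyclotomic.dvd_X_pow_sub_one n R)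

theorem isCoprime_cyclotomic_eval {R : Type*} [CommRing R] {n : ℕ} (hn : 0 < n) (q : R) :
    IsCoprime q ((cyclotomic n R).eval q) := by
  have hq : IsCoprime q (q ^ n - 1) :=
    ⟨q ^ (n - 1), -1, by rw [← pow_succ, Nat.sub_add_cancel hn]; ring⟩
  exact hq.of_isCoprime_of_dvd_right (cyclotomic_eval_dvd_pow_sub_one n q)

end Polynomial

theorem nineteen_dvd_orderOf_three_zmod_1559 : 19 ∣ orderOf (3 : ZMod 1559) := by
  have h3 : (3 : ZMod 1559) ≠ 0 := by decide
  have h82 : (3 : ZMod 1559) ^ (2 * 41) ≠ 1 := by decide +kernel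
  have : Fact (Nat.Prime 1559) := ⟨by norm_num⟩
  have h1558 : orderOf (3 : ZMod 1559) ∣ 2 * 41 * 19 := ZMod.orderOf_dvd_card_sub_one h3
  by_contra h19
  have hcop : Nat.Coprime (orderOf (3 : ZMod 1559)) 19 :=
    ((Nat.Prime.coprime_iff_not_dvd (by norm_num)).mpr h19).symm
  exact h82 (orderOf_dvd_iff_pow_eq_one.mp (hcop.dvd_of_dvd_mul_right h1558))

theorem eighteen_le_totient_of_dvd_three_pow_sub_one {n : ℕ} (hn : 0 < n)
    (h : (1559 : ℤ) ∣ 3 ^ n - 1) : 18 ≤ n.totient := by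
  have hpow : (3 : ZMod 1559) ^ n = 1 := by
    have h0 := (ZMod.intCast_zmod_eq_zero_iff_dvd _ 1559).mpr h
    push_cast at h0
    exact sub_eq_zero.mp h0
  have h19 : 19 ∣ n := nineteen_dvd_orderOf_three_zmod_1559.trans (orderOf_dvd_of_pow_eq_one hpow)
  have h18 : 18 ∣ n.totient := by
    simpa [Nat.totient_prime (by norm_num : Nat.Prime 19)] using Nat.totient_dvd_of_dvd h19
  exact Nat.le_of_dvd (Nat.totient_pos.mpr hn) h18

noncomputable def zetaFactor : ℤ[X] :=
  1 - X + 9 * X ^ 2 - 45 * X ^ 3 + 108 * X ^ 4 - 324 * X ^ 5 + 972 * X ^ 6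
    - 3645 * X ^ 7 + 6561 * X ^ 8 - 6561 * X ^ 9 + 59049 * X ^ 10

/-- `3 P(X/3)` for `P = zetaFactor`. -/
noncomputable def zetaFactorRescaled : ℤ[X] :=
  3 - X + 3 * X ^ 2 - 5 * X ^ 3 + 4 * X ^ 4 - 4 * X ^ 5 + 4 * X ^ 6
    - 5 * X ^ 7 + 3 * X ^ 8 - X ^ 9 + 3 * X ^ 10

theorem aeval_three_mul_zetaFactorRescaled {A : Type*} [CommRing A] (t : A) :
    aeval (3 * t) zetaFactorRescaled = 3 * aeval t zetaFactor := by
  simp only [zetaFactorRescaled, zetaFactor, map_add, map_sub, map_mul, map_pow, map_one,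
    map_ofNat, aeval_X]
  ring

theorem natDegree_zetaFactorRescaled : zetaFactorRescaled.natDegree = 10 := by
  unfold zetaFactorRescaled
  compute_degree!

theorem eval_one_zetaFactorRescaled : zetaFactorRescaled.eval 1 = 4 := by
  norm_num [zetaFactorRescaled]

theorem eval_neg_one_zetaFactorRescaled : zetaFactorRescaled.eval (-1) = 36 := by
  norm_num [zetaFactorRescaled]

theorem eval_three_zetaFactorRescaled : zetaFactorRescaled.eval 3 = 4 * (3 ^ 3 * 1559) := by
  norm_num [zetaFactorRescaled]

theorem not_cyclotomic_dvd_zetaFactorRescaled {d : ℕ} (hd : 0 < d) :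
    ¬ cyclotomic d ℤ ∣ zetaFactorRescaled := by
  intro hdvd
  have htot : d.totient ≤ 10 := by
    have hne : zetaFactorRescaled ≠ 0 := fun h => by
      simpa [h] using eval_one_zetaFactorRescaled
    simpa [natDegree_cyclotomic, natDegree_zetaFactorRescaled] using natDegree_le_of_dvd hdvd hne
  have heval (x : ℤ) : (cyclotomic d ℤ).eval x ∣ zetaFactorRescaled.eval x := eval_dvd hdvd
  obtain rfl | rfl | hd3 : d = 1 ∨ d = 2 ∨ 3 ≤ d := by omega
  · simpa [eval_one_zetaFactorRescaled] using heval 1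
  · simpa [eval_neg_one_zetaFactorRescaled] using heval (-1)
  set a := (cyclotomic d ℤ).eval 3
  have h1559 : ¬ (1559 : ℤ) ∣ a := fun h => by
    have := eighteen_le_totient_of_dvd_three_pow_sub_one hd
      (h.trans (cyclotomic_eval_dvd_pow_sub_one d 3))
    omega
  have hcop : IsCoprime a (3 ^ 3 * 1559) :=
    (isCoprime_cyclotomic_eval hd (3 : ℤ)).symm.pow_right.mul_right
      ((Prime.coprime_iff_not_dvd (by norm_num)).mpr h1559).symm
  have ha4 : a ∣ 4 := hcop.dvd_of_dvd_mul_right (eval_three_zetaFactorRescaled ▸ heval 3)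
  have htot2 : 2 ≤ d.totient := by
    obtain ⟨k, hk⟩ := Nat.totient_even hd3
    have := Nat.totient_pos.mpr hd
    omega
  have hlow : 2 ^ d.totient < a.natAbs := by
    simpa using sub_one_pow_totient_lt_natAbs_cyclotomic_eval (q := 3) (by omega) (by norm_num)
  have hle : a.natAbs ≤ 4 := Nat.le_of_dvd (by norm_num) (Int.natAbs_dvd_natAbs.mpr ha4)
  have : 2 ^ 2 ≤ 2 ^ d.totient := Nat.pow_le_pow_right (by norm_num) htot2
  omega

theorem aeval_zetaFactorRescaled_ne_zero_of_pow_eq_one {K : Type*} [Field K] [CharZero K]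
    {v : K} {n : ℕ} (hn : 0 < n) (hv : v ^ n = 1) : aeval v zetaFactorRescaled ≠ 0 := fun h => by
  have hfin : IsOfFinOrder v := isOfFinOrder_iff_pow_eq_one.mpr ⟨n, hn, hv⟩
  exact not_cyclotomic_dvd_zetaFactorRescaled hfin.orderOf_pos
    (cyclotomic_dvd_of_aeval_eq_zero (IsPrimitiveRoot.orderOf v) hfin.orderOf_pos h)

/-- The polynomial
`P(t) = 1 - t + 9t² - 45t³ + 108t⁴ - 324t⁵ + 972t⁶ - 3645t⁷ + 6561t⁸ - 6561t⁹ + 59049t¹⁰`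
has no root `t` for which `1/(3t)` is a root of unity; equivalently, no inverse root of `P`
is of the form `3ζ` with `ζ` a root of unity. -/
theorem stmt3 (P : Polynomial ℤ)
    (hP : P = 1 - X + 9 * X ^ 2 - 45 * X ^ 3 + 108 * X ^ 4 - 324 * X ^ 5 + 972 * X ^ 6
      - 3645 * X ^ 7 + 6561 * X ^ 8 - 6561 * X ^ 9 + 59049 * X ^ 10) :
    ∀ t : ℂ, Polynomial.aeval t P = 0 → ¬ ∃ n : ℕ, 0 < n ∧ (1 / (3 * t)) ^ n = 1 := by
  rintro t hroot ⟨n, hn, hpow⟩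
  have hP' : P = zetaFactor := hP
  apply aeval_zetaFactorRescaled_ne_zero_of_pow_eq_one hn (v := 3 * t)
  · rwa [one_div, inv_pow, inv_eq_one] at hpow
  · rw [aeval_three_mul_zetaFactorRescaled, ← hP', hroot, mul_zero]
end

section
/- The polynomial 1 - t + 9t² - 45t³ + 108t⁴ - 324t⁵ + 972t⁶ - 3645t⁷ + 6561t⁸ - 6561t⁹ + 59049t¹⁰ is irreducible over ℚ. -/
/-!
The polynomial is the image of a primitive `P ∈ ℤ[X]` whose leading coefficient `3 ^ 10` is
prime to `7`, so by Gauss's lemma it suffices that its reduction `P₇` modulo `7` is irreducible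
over `𝔽₇`. An irreducible factor of degree `d` of `P₇` divides `X ^ 7 ^ d - X`, so it is enough
that `P₇` is coprime to `X ^ 7 ^ d - X` for `1 ≤ d ≤ 5`. The residues of `X ^ 7 ^ d` modulo
`P₇` are computed by iterating the Frobenius `r ↦ r ^ 7 = r (X ^ 7)`, and each coprimality is
witnessed by a Bézout identity.
-/

open Polynomial

namespace Polynomial

theorem isPrimitive_of_isUnit_coeff {R : Type*} [CommSemiring R] {f : R[X]} {n : ℕ}
    (h : IsUnit (f.coeff n)) : f.IsPrimitive :=
  fun r hr => isUnit_of_dvd_unit ((C_dvd_iff_dvd_coeff r f).1 hr n) h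

theorem IsPrimitive.irreducible_of_irreducible_map_of_natDegree_eq
    {R S : Type*} [CommRing R] [IsDomain R] [CommRing S] [IsDomain S] {φ : R →+* S} {f : R[X]}
    (hf : f.IsPrimitive) (hdeg : (f.map φ).natDegree = f.natDegree)
    (h_irr : Irreducible (f.map φ)) : Irreducible f := by
  have isUnit_of_factor : ∀ a b, f = a * b → IsUnit (a.map φ) → IsUnit a := by
    intro a b hab ha
    have hmap : f.map φ = a.map φ * b.map φ := by rw [hab, Polynomial.map_mul]
    have hmap0 : a.map φ * b.map φ ≠ 0 := hmap ▸ h_irr.ne_zero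
    have hab0 : a * b ≠ 0 := hab ▸ hf.ne_zero
    have hsum := congrArg natDegree hmap
    rw [natDegree_mul (left_ne_zero_of_mul hmap0) (right_ne_zero_of_mul hmap0), hdeg, hab,
      natDegree_mul (left_ne_zero_of_mul hab0) (right_ne_zero_of_mul hab0),
      natDegree_eq_zero_of_isUnit ha] at hsum
    have ha0 : a.natDegree = 0 := by
      have := natDegree_map_le (f := φ) (p := b)
      omega
    rw [eq_C_of_natDegree_eq_zero ha0] at hab ⊢
    exact isUnit_C.2 (hf _ ⟨b, hab⟩)
  refine ⟨fun hu => h_irr.not_isUnit (hu.map (mapRingHom φ)), fun a b hab => ?_⟩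
  have hmap : f.map φ = a.map φ * b.map φ := by rw [hab, Polynomial.map_mul]
  exact (h_irr.isUnit_or_isUnit hmap).imp (isUnit_of_factor a b hab)
    (isUnit_of_factor b a (hab.trans (mul_comm a b)))

theorem irreducible_of_isCoprime_X_pow_card_pow_sub_X {k : Type*} [Field k] [Finite k]
    {f : k[X]} (hf : 0 < f.natDegree)
    (h : ∀ d ∈ Finset.Ioc 0 (f.natDegree / 2), IsCoprime f (X ^ Nat.card k ^ d - X)) :
    Irreducible f := by
  rw [irreducible_iff_lt_natDegree_lt (ne_zero_of_natDegree_gt hf)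
    (not_isUnit_of_natDegree_pos f hf)]
  intro q hq hdeg hqf
  obtain ⟨g, hg, hgq⟩ := WfDvdMonoid.exists_irreducible_factor
    (not_isUnit_of_natDegree_pos q (Finset.mem_Ioc.1 hdeg).1) hq.ne_zero
  have hgd : g.natDegree ∈ Finset.Ioc 0 (f.natDegree / 2) :=
    Finset.mem_Ioc.2 ⟨hg.natDegree_pos,
      (natDegree_le_of_dvd hgq hq.ne_zero).trans (Finset.mem_Ioc.1 hdeg).2⟩
  exact hg.not_isUnit ((h _ hgd).isUnit_of_dvd' (hgq.trans hqf)
    (hg.natDegree_dvd_iff_dvd_X_pow_card_pow_sub_X.1 dvd_rfl))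

end Polynomial

theorem IsCoprime.sub_of_dvd_sub {R : Type*} [CommRing R] {f a b c : R}
    (hc : IsCoprime f (b - c)) (h : f ∣ a - b) : IsCoprime f (a - c) := by
  obtain ⟨k, hk⟩ := h
  rw [show a - c = b - c + f * k by rw [← hk]; ring]
  exact hc.add_mul_left_right k

theorem ZMod.dvd_X_pow_pow_sub_of_dvd_expand_sub {p : ℕ} [Fact p.Prime] {f : (ZMod p)[X]}
    {r : ℕ → (ZMod p)[X]} {n : ℕ} (h0 : r 0 = X)
    (hstep : ∀ d < n, f ∣ expand (ZMod p) p (r d) - r (d + 1)) :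
    ∀ d ≤ n, f ∣ X ^ p ^ d - r d := by
  intro d hd
  induction d with
  | zero => simp [h0]
  | succ d ih =>
    have frobenius : X ^ p ^ (d + 1) - expand (ZMod p) p (r d) = (X ^ p ^ d - r d) ^ p := by
      rw [ZMod.expand_card, pow_succ, pow_mul, sub_pow_char]
    rw [← sub_add_sub_cancel _ (expand (ZMod p) p (r d)), frobenius]
    exact dvd_add (dvd_pow (ih (by omega)) (Fact.out : p.Prime).ne_zero) (hstep d (by omega))

theorem ZMod.irreducible_of_dvd_expand_sub_of_isCoprime_sub_X {p : ℕ} [Fact p.Prime]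
    {f : (ZMod p)[X]} (hf : 0 < f.natDegree) (r : ℕ → (ZMod p)[X]) (h0 : r 0 = X)
    (hstep : ∀ d < f.natDegree / 2, f ∣ expand (ZMod p) p (r d) - r (d + 1))
    (hcop : ∀ d ∈ Finset.Ioc 0 (f.natDegree / 2), IsCoprime f (r d - X)) : Irreducible f := by
  refine irreducible_of_isCoprime_X_pow_card_pow_sub_X hf fun d hd => ?_
  rw [Nat.card_zmod]
  exact (hcop d hd).sub_of_dvd_sub
    (dvd_X_pow_pow_sub_of_dvd_expand_sub h0 hstep d (Finset.mem_Ioc.1 hd).2)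

namespace Stmt4

noncomputable def P : ℤ[X] :=
  1 - X + 9 * X ^ 2 - 45 * X ^ 3 + 108 * X ^ 4 - 324 * X ^ 5 + 972 * X ^ 6
    - 3645 * X ^ 7 + 6561 * X ^ 8 - 6561 * X ^ 9 + 59049 * X ^ 10

noncomputable def P₇ : (ZMod 7)[X] :=
  1 + 6 * X + 2 * X ^ 2 + 4 * X ^ 3 + 3 * X ^ 4 + 5 * X ^ 5 + 6 * X ^ 6 + 2 * X ^ 7 + 2 * X ^ 8
    + 5 * X ^ 9 + 4 * X ^ 10

theorem natDegree_P : P.natDegree = 10 := by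
  unfold P; compute_degree!

theorem natDegree_P₇ : P₇.natDegree = 10 := by
  unfold P₇; compute_degree!

theorem map_P_zmod : P.map (Int.castRingHom (ZMod 7)) = P₇ := by
  unfold P P₇
  simp only [Polynomial.map_add, Polynomial.map_sub, Polynomial.map_mul, Polynomial.map_pow,
    Polynomial.map_ofNat, Polynomial.map_one, Polynomial.map_X]
  rw [← sub_eq_zero]; ring_nf; reduce_mod_char

theorem isPrimitive_P : P.IsPrimitive :=
  isPrimitive_of_isUnit_coeff (n := 0) (by simp [P])

instance fact_prime_seven : Fact (Nat.Prime 7) := ⟨by norm_num⟩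

/-- The remainder of `X ^ 7 ^ d` modulo `P₇`; only `d ≤ 5` is needed. -/
noncomputable def residue : ℕ → (ZMod 7)[X]
  | 0 => X
  | 1 => X ^ 7
  | 2 => 6 + 5 * X ^ 2 + 6 * X ^ 3 + 3 * X ^ 4 + 3 * X ^ 6 + 2 * X ^ 7 + 2 * X ^ 9
  | 3 => 4 + 3 * X + X ^ 3 + 4 * X ^ 4 + 3 * X ^ 5 + 4 * X ^ 6 + 4 * X ^ 8 + 6 * X ^ 9
  | 4 => 3 + 4 * X + 6 * X ^ 2 + 6 * X ^ 3 + 6 * X ^ 4 + 2 * X ^ 5 + 5 * X ^ 6 + 2 * X ^ 7 +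
    X ^ 8 + 5 * X ^ 9
  | _ => 4 + 6 * X + 5 * X ^ 2 + 2 * X ^ 3 + X ^ 4 + 4 * X ^ 5 + 6 * X ^ 6 + 6 * X ^ 7 + X ^ 8 +
    5 * X ^ 9

set_option maxHeartbeats 400000 in
theorem P₇_dvd_expand_residue_sub {d : ℕ} (hd : d < 5) :
    P₇ ∣ expand (ZMod 7) 7 (residue d) - residue (d + 1) := by
  interval_cases d
  · simp [residue]
  · refine Dvd.intro
      (1 + X + X ^ 2 + 3 * X ^ 3 + 5 * X ^ 4 + X ^ 5 + 4 * X ^ 6 + 4 * X ^ 8 + X ^ 9 +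
       6 * X ^ 10 + X ^ 12 + 5 * X ^ 13 + 2 * X ^ 15 + X ^ 16 + 6 * X ^ 17 + 2 * X ^ 18 +
       5 * X ^ 19 + 5 * X ^ 20 + 5 * X ^ 23 + 6 * X ^ 24 + 3 * X ^ 25 + 5 * X ^ 26 + 4 * X ^ 27 +
       X ^ 28 + 6 * X ^ 29 + 4 * X ^ 30 + 2 * X ^ 31 + 6 * X ^ 34 + 2 * X ^ 35 + 3 * X ^ 37 +
       X ^ 38 + 2 * X ^ 39) ?_
    simp only [P₇, residue, map_pow, expand_X]
    rw [← sub_eq_zero]; ring_nf; reduce_mod_char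
  · refine Dvd.intro
      (2 + 6 * X + 2 * X ^ 2 + 2 * X ^ 3 + 6 * X ^ 4 + 5 * X ^ 5 + 3 * X ^ 6 + 4 * X ^ 7 +
       2 * X ^ 8 + 5 * X ^ 9 + 2 * X ^ 10 + 3 * X ^ 11 + 2 * X ^ 13 + X ^ 14 + 6 * X ^ 15 +
       4 * X ^ 17 + X ^ 18 + 6 * X ^ 19 + 2 * X ^ 20 + 3 * X ^ 21 + 5 * X ^ 22 + 3 * X ^ 23 +
       2 * X ^ 24 + 6 * X ^ 25 + 5 * X ^ 26 + X ^ 27 + X ^ 28 + 2 * X ^ 29 + 5 * X ^ 30 +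
       5 * X ^ 31 + 3 * X ^ 32 + 3 * X ^ 33 + X ^ 34 + 4 * X ^ 35 + 2 * X ^ 37 + 3 * X ^ 39 +
       3 * X ^ 40 + X ^ 41 + 2 * X ^ 42 + 5 * X ^ 43 + X ^ 44 + 4 * X ^ 45 + 5 * X ^ 48 +
       4 * X ^ 49 + 6 * X ^ 51 + 2 * X ^ 52 + 4 * X ^ 53) ?_
    simp only [P₇, residue, map_add, map_mul, map_pow, map_ofNat, expand_X]
    rw [← sub_eq_zero]; ring_nf; reduce_mod_char
  · refine Dvd.intro
      (1 + 4 * X + 3 * X ^ 2 + 6 * X ^ 3 + 3 * X ^ 4 + 2 * X ^ 5 + 2 * X ^ 6 + 5 * X ^ 7 +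
       2 * X ^ 8 + X ^ 9 + 6 * X ^ 10 + X ^ 11 + 2 * X ^ 12 + 5 * X ^ 13 + 3 * X ^ 14 + 5 * X ^ 15 +
       5 * X ^ 16 + 6 * X ^ 17 + X ^ 18 + 2 * X ^ 19 + X ^ 20 + 3 * X ^ 21 + X ^ 24 + 5 * X ^ 26 +
       4 * X ^ 27 + X ^ 28 + 5 * X ^ 29 + 3 * X ^ 30 + X ^ 31 + 4 * X ^ 32 + X ^ 33 + 4 * X ^ 34 +
       4 * X ^ 35 + 3 * X ^ 36 + 4 * X ^ 37 + 2 * X ^ 38 + 4 * X ^ 39 + 2 * X ^ 40 + 6 * X ^ 41 +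
       X ^ 43 + X ^ 44 + 2 * X ^ 45 + X ^ 46 + X ^ 48 + 5 * X ^ 49 + 4 * X ^ 51 + 6 * X ^ 52 +
       5 * X ^ 53) ?_
    simp only [P₇, residue, map_add, map_mul, map_pow, map_ofNat, expand_X]
    rw [← sub_eq_zero]; ring_nf; reduce_mod_char
  · refine Dvd.intro
      (6 + 4 * X ^ 2 + 6 * X ^ 3 + X ^ 5 + 2 * X ^ 7 + X ^ 8 + 6 * X ^ 9 + 3 * X ^ 10 +
       6 * X ^ 11 + 6 * X ^ 12 + 5 * X ^ 13 + 5 * X ^ 14 + 4 * X ^ 15 + 3 * X ^ 16 + 3 * X ^ 17 +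
       6 * X ^ 19 + 4 * X ^ 20 + 2 * X ^ 21 + 3 * X ^ 22 + 4 * X ^ 24 + 5 * X ^ 25 + 6 * X ^ 26 +
       5 * X ^ 27 + 5 * X ^ 28 + X ^ 29 + 5 * X ^ 30 + 3 * X ^ 31 + 2 * X ^ 32 + 2 * X ^ 33 +
       6 * X ^ 34 + 5 * X ^ 35 + 6 * X ^ 36 + 6 * X ^ 38 + 5 * X ^ 39 + 4 * X ^ 40 + 5 * X ^ 41 +
       2 * X ^ 43 + 2 * X ^ 44 + 4 * X ^ 45 + 2 * X ^ 46 + 2 * X ^ 48 + 3 * X ^ 49 + X ^ 51 +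
       5 * X ^ 52 + 3 * X ^ 53) ?_
    simp only [P₇, residue, map_add, map_mul, map_pow, map_ofNat, expand_X]
    rw [← sub_eq_zero]; ring_nf; reduce_mod_char

theorem isCoprime_P₇_residue_sub_X {d : ℕ} (hd : d ∈ Finset.Ioc 0 5) :
    IsCoprime P₇ (residue d - X) := by
  obtain ⟨hd0, hd5⟩ := Finset.mem_Ioc.1 hd
  interval_cases d
  · refine ⟨1 + 2 * X + 6 * X ^ 3 + 4 * X ^ 4 + 5 * X ^ 5 + 6 * X ^ 6,
      1 + 2 * X ^ 3 + 3 * X ^ 4 + 4 * X ^ 6 + 3 * X ^ 7 + 6 * X ^ 8 + 4 * X ^ 9, ?_⟩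
    simp only [P₇, residue]; rw [← sub_eq_zero]; ring_nf; reduce_mod_char
  · refine ⟨3 * X + X ^ 2 + 6 * X ^ 3 + X ^ 4 + 6 * X ^ 5 + 4 * X ^ 6 + X ^ 7 + X ^ 8,
      6 + 4 * X + 3 * X ^ 2 + X ^ 3 + 2 * X ^ 4 + X ^ 6 + X ^ 7 + 6 * X ^ 8 + 5 * X ^ 9, ?_⟩
    simp only [P₇, residue]; rw [← sub_eq_zero]; ring_nf; reduce_mod_char
  · refine ⟨5 + 2 * X + 2 * X ^ 2 + 4 * X ^ 3 + 2 * X ^ 4 + 4 * X ^ 5 + 6 * X ^ 6 +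
      3 * X ^ 7 + 3 * X ^ 8,
      6 + 3 * X + 3 * X ^ 2 + X ^ 3 + 4 * X ^ 4 + 2 * X ^ 5 + 2 * X ^ 6 + 2 * X ^ 7 +
      5 * X ^ 8 + 5 * X ^ 9, ?_⟩
    simp only [P₇, residue]; rw [← sub_eq_zero]; ring_nf; reduce_mod_char
  · refine ⟨5 + X + 2 * X ^ 2 + 4 * X ^ 4 + X ^ 5 + 6 * X ^ 6 + 2 * X ^ 7 + 2 * X ^ 8,
      1 + 5 * X + X ^ 2 + 6 * X ^ 3 + 6 * X ^ 4 + 5 * X ^ 5 + 2 * X ^ 6 + 4 * X ^ 7 +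
      4 * X ^ 8 + 4 * X ^ 9, ?_⟩
    simp only [P₇, residue]; rw [← sub_eq_zero]; ring_nf; reduce_mod_char
  · refine ⟨5 + 6 * X + 4 * X ^ 2 + 3 * X ^ 3 + 6 * X ^ 4 + 5 * X ^ 5 + 5 * X ^ 6 +
      2 * X ^ 8,
      6 + X + 5 * X ^ 2 + X ^ 3 + 6 * X ^ 4 + 5 * X ^ 5 + 3 * X ^ 6 + 3 * X ^ 7 + 4 * X ^ 9, ?_⟩
    simp only [P₇, residue]; rw [← sub_eq_zero]; ring_nf; reduce_mod_char

theorem irreducible_P₇ : Irreducible P₇ := by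
  refine ZMod.irreducible_of_dvd_expand_sub_of_isCoprime_sub_X (by rw [natDegree_P₇]; norm_num)
    residue rfl (fun d hd => ?_) (fun d hd => ?_) <;> rw [natDegree_P₇] at hd
  · exact P₇_dvd_expand_residue_sub hd
  · exact isCoprime_P₇_residue_sub_X hd

theorem irreducible_P : Irreducible P :=
  isPrimitive_P.irreducible_of_irreducible_map_of_natDegree_eq (φ := Int.castRingHom (ZMod 7))
    (by rw [map_P_zmod, natDegree_P₇, natDegree_P]) (map_P_zmod ▸ irreducible_P₇)

end Stmt4

/-- The polynomial
`1 - t + 9t² - 45t³ + 108t⁴ - 324t⁵ + 972t⁶ - 3645t⁷ + 6561t⁸ - 6561t⁹ + 59049t¹⁰`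
is irreducible over `ℚ`. -/
theorem stmt4 :
    Irreducible (1 - X + 9 * X ^ 2 - 45 * X ^ 3 + 108 * X ^ 4 - 324 * X ^ 5 + 972 * X ^ 6
      - 3645 * X ^ 7 + 6561 * X ^ 8 - 6561 * X ^ 9 + 59049 * X ^ 10 : Polynomial ℚ) := by
  simpa [Stmt4.P] using
    (IsPrimitive.Int.irreducible_iff_irreducible_map_cast Stmt4.isPrimitive_P).1 Stmt4.irreducible_P
end
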